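/- Let Γ be the random bipartite graph. Then S_{l}(Γ) = {σ ∈ Sym_{l,r}(Γ) : σ preserves the parity of cross-types in every (1×2)-subgraph of Γ}. -/

import Mathlib

/-! Preamble: bipartite graphs, the random bipartite graph, side-preserving
permutation groups, switches, switch groups, and related notions. -/

/-- A bipartite graph on a vertex type `V`: the sides `left` and `right`
partition `V`, both sides are nonempty, and `adj` (the relation `P₁`) only holds
from `left` to `right`.  The relation `P₂` is the complement of `adj` on
`left × right`. -/
structure BipartiteGraph (V : Type*) where
  left : Set V
  right : Set V
  adj : V → V → Prop
  left_nonempty : left.Nonempty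
  right_nonempty : right.Nonempty
  union_eq : left ∪ right = Set.univ
  disjoint_sides : Disjoint left right
  adj_dom : ∀ a b, adj a b → a ∈ left ∧ b ∈ right

/-- The two sides of a bipartite graph. -/
inductive BSide : Type
  | l : BSide
  | r : BSide
deriving DecidableEq

namespace BipartiteGraph

variable {V : Type*} (Γ : BipartiteGraph V)

/-- The side of the graph indexed by an element of `BSide`. -/
def side : BSide → Set V
  | BSide.l => Γ.left
  | BSide.r => Γ.right

/-- `Γ` is (isomorphic to) the random bipartite graph: it is countable, both
sides are infinite, and it satisfies the extension properties `Θₙ` for all `n`. -/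
structure IsRandom : Prop where
  countable : Countable V
  left_infinite : Γ.left.Infinite
  right_infinite : Γ.right.Infinite
  ext_left : ∀ X₁ X₂ : Finset V, ↑X₁ ⊆ Γ.left → ↑X₂ ⊆ Γ.left → Disjoint X₁ X₂ →
      ∃ v ∈ Γ.right, (∀ x ∈ X₁, Γ.adj x v) ∧ (∀ x ∈ X₂, ¬ Γ.adj x v)
  ext_right : ∀ X₁ X₂ : Finset V, ↑X₁ ⊆ Γ.right → ↑X₂ ⊆ Γ.right → Disjoint X₁ X₂ →
      ∃ v ∈ Γ.left, (∀ x ∈ X₁, Γ.adj v x) ∧ (∀ x ∈ X₂, ¬ Γ.adj v x)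

/-- `Sym_{l,r}(Γ)`: the group of permutations of `V` preserving both sides. -/
def symLR : Subgroup (Equiv.Perm V) where
  carrier := {g | (∀ v, g v ∈ Γ.left ↔ v ∈ Γ.left) ∧ (∀ v, g v ∈ Γ.right ↔ v ∈ Γ.right)}
  one_mem' := ⟨fun _ => Iff.rfl, fun _ => Iff.rfl⟩
  mul_mem' := by
    rintro a b ⟨hal, har⟩ ⟨hbl, hbr⟩
    exact ⟨fun v => (hal (b v)).trans (hbl v), fun v => (har (b v)).trans (hbr v)⟩
  inv_mem' := by
    rintro a ⟨hal, har⟩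
    refine ⟨fun v => ?_, fun v => ?_⟩
    · have h := hal (a⁻¹ v); rw [Equiv.Perm.coe_inv, Equiv.apply_symm_apply] at h; exact h.symm
    · have h := har (a⁻¹ v); rw [Equiv.Perm.coe_inv, Equiv.apply_symm_apply] at h; exact h.symm

/-- The automorphism group of `Γ`: side-preserving permutations preserving `adj`
(and hence both cross-types). -/
def autGroup : Subgroup (Equiv.Perm V) where
  carrier := {g | g ∈ Γ.symLR ∧ ∀ a b, Γ.adj a b ↔ Γ.adj (g a) (g b)}
  one_mem' := ⟨Γ.symLR.one_mem, fun _ _ => Iff.rfl⟩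
  mul_mem' := by
    rintro a b ⟨ha, ha2⟩ ⟨hb, hb2⟩
    exact ⟨mul_mem ha hb, fun x y => (hb2 x y).trans (ha2 (b x) (b y))⟩
  inv_mem' := by
    rintro a ⟨ha, ha2⟩
    refine ⟨inv_mem ha, fun x y => ?_⟩
    have h := ha2 (a⁻¹ x) (a⁻¹ y)
    rw [Equiv.Perm.coe_inv, Equiv.apply_symm_apply, Equiv.apply_symm_apply] at h
    exact h.symm

/-- A permutation `g` is a switch with respect to a set `A` if it preserves the
sides and, for every cross-edge `(a, b)`, the cross-type of `(a, b)` is preserved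
if and only if `|{a, b} ∩ A| ≠ 1`. -/
def IsSwitch (g : Equiv.Perm V) (A : Set V) : Prop :=
  g ∈ Γ.symLR ∧ ∀ a ∈ Γ.left, ∀ b ∈ Γ.right,
    ((Γ.adj a b ↔ Γ.adj (g a) (g b)) ↔ ({a, b} ∩ A : Set V).ncard ≠ 1)

/-- The restriction of a map `g` to a set `S` is a switch with respect to `A`:
the condition of `IsSwitch` holds for all cross-edges inside `S`. -/
def IsSwitchOn (g : V → V) (S : Set V) (A : Set V) : Prop :=
  ∀ a ∈ S ∩ Γ.left, ∀ b ∈ S ∩ Γ.right,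
    ((Γ.adj a b ↔ Γ.adj (g a) (g b)) ↔ ({a, b} ∩ A : Set V).ncard ≠ 1)

/-- The restriction of a map `g` to a set `S` is an isomorphism: `g` preserves
the cross-type of every cross-edge inside `S`. -/
def IsIsoOn (g : V → V) (S : Set V) : Prop :=
  ∀ a ∈ S ∩ Γ.left, ∀ b ∈ S ∩ Γ.right, (Γ.adj a b ↔ Γ.adj (g a) (g b))

end BipartiteGraph

/-- A subgroup of the full symmetric group is closed (in the topology of
pointwise convergence) iff it contains every permutation which agrees with some
member of the subgroup on each finite subset. -/
def IsClosedSubgroup {V : Type*} (G : Subgroup (Equiv.Perm V)) : Prop :=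
  ∀ g : Equiv.Perm V, (∀ F : Finset V, ∃ h ∈ G, ∀ x ∈ F, h x = g x) → g ∈ G

/-- The closed subgroup generated by a set of permutations: the intersection of
all closed subgroups containing the set. -/
def closedClosure {V : Type*} (S : Set (Equiv.Perm V)) : Subgroup (Equiv.Perm V) :=
  sInf {G : Subgroup (Equiv.Perm V) | IsClosedSubgroup G ∧ S ⊆ ↑G}

namespace BipartiteGraph

variable {V : Type*} (Γ : BipartiteGraph V)

/-- The switch group `S_X(Γ)`: the closed subgroup of `Sym_{l,r}(Γ)` generated
by `Aut(Γ)` together with all switches with respect to a single vertex `v ∈ R_i`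
for `i ∈ X`. -/
def switchGroup (X : Set BSide) : Subgroup (Equiv.Perm V) :=
  closedClosure ((Γ.autGroup : Set (Equiv.Perm V)) ∪
    {g | ∃ i ∈ X, ∃ v ∈ Γ.side i, Γ.IsSwitch g {v}})

/-- The group `S_X(Γ)* `: the closed subgroup generated by `S_X(Γ)` together with
a switch `ρ` with respect to the whole side `R_l`. -/
def switchGroupStar (X : Set BSide) : Subgroup (Equiv.Perm V) :=
  closedClosure ((Γ.switchGroup X : Set (Equiv.Perm V)) ∪ {g | Γ.IsSwitch g Γ.left})

/-- Membership in `Aut(Γ)*`, the group of side-preserving permutations which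
either preserve all cross-types on `R_l × R_r` or exchange all cross-types on
`R_l × R_r`. -/
def InAutStar (g : Equiv.Perm V) : Prop :=
  g ∈ Γ.symLR ∧
    ((∀ a ∈ Γ.left, ∀ b ∈ Γ.right, (Γ.adj a b ↔ Γ.adj (g a) (g b))) ∨
     (∀ a ∈ Γ.left, ∀ b ∈ Γ.right, (Γ.adj a b ↔ ¬ Γ.adj (g a) (g b))))

/-- The number of cross-edges of cross-type `P₁` inside the set `S`. -/
noncomputable def edgeCount (S : Set V) : ℕ :=
  {p : V × V | p.1 ∈ S ∧ p.2 ∈ S ∧ Γ.adj p.1 p.2}.ncard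

/-- `g` preserves the parity of cross-types on `S`: the number of `P₁`
cross-edges in `S` is even iff the number of `P₁` cross-edges in `g[S]` is even. -/
def PreservesParityOn (g : V → V) (S : Set V) : Prop :=
  Even (Γ.edgeCount S) ↔ Even (Γ.edgeCount (g '' S))

/-- An `(m × n)`-subgraph of `Γ`: a finite set of vertices with `m` vertices on
the left side and `n` vertices on the right side. -/
def IsMNSubgraph (S : Set V) (m n : ℕ) : Prop :=
  S.Finite ∧ (S ∩ Γ.left).ncard = m ∧ (S ∩ Γ.right).ncard = n

end BipartiteGraph

/-!
For a side-preserving `σ` and a `(1 × 2)`-subgraph `{a, b₁, b₂}`, the parity of cross-types is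
preserved exactly when `σ` preserves the cross-type of `(a, b₁)` iff it preserves that of
`(a, b₂)`. So the parity preservers are the permutations which on each row `{a} × R_r` keep all
cross-types or exchange all of them, i.e. the switches with respect to subsets of `R_l`. They form
a closed group containing `Aut(Γ)` and the single-vertex switches of `R_l`, whence `⊆`.
Conversely, on a finite set `F` such a `σ` agrees with `α * τ`, where `τ` is a product of
single-vertex switches at the flipped rows met by `F` and `α` is an automorphism extending the
finite partial isomorphism `σ τ⁻¹` on `τ F`. Both the automorphism and the single-vertex switches
come from back and forth: a switch at `w` is an isomorphism from `Γ` onto the graph obtained by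
switching `Γ` at `w`, which is again random.
-/

namespace BipartiteGraph

variable {V W : Type*} {Γ : BipartiteGraph V} {Δ : BipartiteGraph W}

lemma notMem_right_of_mem_left {v : V} (h : v ∈ Γ.left) : v ∉ Γ.right :=
  Set.disjoint_left.1 Γ.disjoint_sides h

lemma notMem_left_of_mem_right {v : V} (h : v ∈ Γ.right) : v ∉ Γ.left :=
  Set.disjoint_right.1 Γ.disjoint_sides h

lemma mem_right_iff_notMem_left {v : V} : v ∈ Γ.right ↔ v ∉ Γ.left := by
  refine ⟨notMem_left_of_mem_right, fun h => ?_⟩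
  have hv : v ∈ Γ.left ∪ Γ.right := Γ.union_eq ▸ Set.mem_univ v
  exact hv.resolve_left h

lemma not_adj_self (v : V) : ¬ Γ.adj v v := fun h =>
  notMem_right_of_mem_left (Γ.adj_dom v v h).1 (Γ.adj_dom v v h).2

variable (Γ) in
def swap : BipartiteGraph V where
  left := Γ.right
  right := Γ.left
  adj a b := Γ.adj b a
  left_nonempty := Γ.right_nonempty
  right_nonempty := Γ.left_nonempty
  union_eq := Set.union_comm Γ.left Γ.right ▸ Γ.union_eq
  disjoint_sides := Γ.disjoint_sides.symm
  adj_dom a b h := (Γ.adj_dom b a h).symm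

lemma IsRandom.swap (hΓ : Γ.IsRandom) : Γ.swap.IsRandom :=
  ⟨hΓ.countable, hΓ.right_infinite, hΓ.left_infinite, hΓ.ext_right, hΓ.ext_left⟩

open scoped Classical in
lemma IsRandom.exists_right_adj_iff (hΓ : Γ.IsRandom) (X : Finset V) (hX : ↑X ⊆ Γ.left)
    (φ : V → Prop) (T : Finset V) :
    ∃ v ∈ Γ.right, v ∉ T ∧ ∀ x ∈ X, (Γ.adj x v ↔ φ x) := by
  induction T using Finset.induction_on generalizing X φ with
  | empty =>
    obtain ⟨v, hv, hpos, hneg⟩ := hΓ.ext_left (X.filter φ) (X.filter (¬ φ ·))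
      (fun x hx => hX (Finset.mem_filter.1 hx).1) (fun x hx => hX (Finset.mem_filter.1 hx).1)
      (Finset.disjoint_filter_filter_not X X φ)
    refine ⟨v, hv, Finset.notMem_empty v, fun x hx => ?_⟩
    by_cases hφ : φ x
    · exact iff_of_true (hpos x (Finset.mem_filter.2 ⟨hx, hφ⟩)) hφ
    · exact iff_of_false (hneg x (Finset.mem_filter.2 ⟨hx, hφ⟩)) hφ
  | @insert t T _ ih =>
    -- a fresh vertex `z` whose adjacency to `v` is forced to differ from its adjacency to `t`
    obtain ⟨z, hz, hzX⟩ := hΓ.left_infinite.exists_notMem_finset X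
    obtain ⟨v, hv, hvT, hvX⟩ := ih (insert z X) (by simpa [Set.insert_subset_iff] using ⟨hz, hX⟩)
      (fun x => if x = z then ¬ Γ.adj z t else φ x)
    have hvt : v ≠ t := by
      rintro rfl
      simpa using hvX z (Finset.mem_insert_self z X)
    refine ⟨v, hv, by simp [hvt, hvT], fun x hx => ?_⟩
    have hxz : x ≠ z := by rintro rfl; exact hzX hx
    simpa [hxz] using hvX x (Finset.mem_insert_of_mem hx)

lemma IsRandom.exists_left_adj_iff (hΓ : Γ.IsRandom) (Y : Finset V) (hY : ↑Y ⊆ Γ.right)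
    (φ : V → Prop) (T : Finset V) :
    ∃ u ∈ Γ.left, u ∉ T ∧ ∀ y ∈ Y, (Γ.adj u y ↔ φ y) :=
  hΓ.swap.exists_right_adj_iff Y hY φ T

variable (Γ Δ) in
structure IsPartialIso (p : Finset (V × W)) : Prop where
  fst_eq_iff : ∀ q ∈ p, ∀ r ∈ p, q.1 = r.1 ↔ q.2 = r.2
  mem_left_iff : ∀ q ∈ p, q.1 ∈ Γ.left ↔ q.2 ∈ Δ.left
  adj_iff : ∀ q ∈ p, ∀ r ∈ p, Γ.adj q.1 r.1 ↔ Δ.adj q.2 r.2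

lemma IsPartialIso.swap {p : Finset (V × W)} (hp : Γ.IsPartialIso Δ p) :
    Γ.swap.IsPartialIso Δ.swap p where
  fst_eq_iff := hp.fst_eq_iff
  mem_left_iff q hq := by
    simp only [BipartiteGraph.swap, mem_right_iff_notMem_left, hp.mem_left_iff q hq]
  adj_iff q hq r hr := hp.adj_iff r hr q hq

lemma IsPartialIso.symm {p : Finset (V × W)} (hp : Γ.IsPartialIso Δ p) :
    Δ.IsPartialIso Γ (p.map (Equiv.prodComm V W).toEmbedding) where
  fst_eq_iff _ hq _ hr := (hp.fst_eq_iff _ (Finset.mem_map_equiv.1 hq) _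
    (Finset.mem_map_equiv.1 hr)).symm
  mem_left_iff _ hq := (hp.mem_left_iff _ (Finset.mem_map_equiv.1 hq)).symm
  adj_iff _ hq _ hr := (hp.adj_iff _ (Finset.mem_map_equiv.1 hq) _
    (Finset.mem_map_equiv.1 hr)).symm

open scoped Classical in
lemma IsPartialIso.exists_insert_of_mem_left (hΔ : Δ.IsRandom) {p : Finset (V × W)}
    (hp : Γ.IsPartialIso Δ p) {x : V} (hx : x ∈ Γ.left) (hxp : ∀ q ∈ p, q.1 ≠ x) :
    ∃ y, Γ.IsPartialIso Δ (insert (x, y) p) := by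
  obtain ⟨y, hy, hyp, hadj⟩ := hΔ.exists_left_adj_iff
    ((p.filter (·.1 ∈ Γ.right)).image Prod.snd)
    (by
      simp only [Finset.coe_image, Finset.coe_filter, Set.image_subset_iff]
      exact fun q hq => mem_right_iff_notMem_left.2 fun h =>
        notMem_left_of_mem_right hq.2 ((hp.mem_left_iff q hq.1).2 h))
    (fun y' => ∃ q ∈ p, q.2 = y' ∧ Γ.adj x q.1) (p.image Prod.snd)
  have hyp' : ∀ q ∈ p, q.2 ≠ y := fun q hq h => hyp (Finset.mem_image.2 ⟨q, hq, h⟩)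
  have hxq : ∀ q ∈ p, Γ.adj x q.1 ↔ Δ.adj y q.2 := by
    intro q hq
    by_cases hq₁ : q.1 ∈ Γ.left
    · have hq₂ := (hp.mem_left_iff q hq).1 hq₁
      exact iff_of_false (fun h => notMem_right_of_mem_left hq₁ (Γ.adj_dom _ _ h).2)
        (fun h => notMem_right_of_mem_left hq₂ (Δ.adj_dom _ _ h).2)
    · have hqY : q ∈ p.filter (·.1 ∈ Γ.right) :=
        Finset.mem_filter.2 ⟨hq, mem_right_iff_notMem_left.2 hq₁⟩
      rw [hadj q.2 (Finset.mem_image.2 ⟨q, hqY, rfl⟩)]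
      exact ⟨fun h => ⟨q, hq, rfl, h⟩, fun ⟨r, hr, hrq, h⟩ =>
        ((hp.fst_eq_iff r hr q hq).2 hrq) ▸ h⟩
  have hqx : ∀ q ∈ p, Γ.adj q.1 x ↔ Δ.adj q.2 y := fun q _ =>
    iff_of_false (fun h => notMem_right_of_mem_left hx (Γ.adj_dom _ _ h).2)
      (fun h => notMem_right_of_mem_left hy (Δ.adj_dom _ _ h).2)
  refine ⟨y, ⟨?_, ?_, ?_⟩⟩ <;> simp only [Finset.mem_insert, forall_eq_or_imp]
  · exact ⟨⟨trivial, fun r hr => iff_of_false (hxp r hr).symm (hyp' r hr).symm⟩,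
      fun q hq => ⟨iff_of_false (hxp q hq) (hyp' q hq), fun r hr => hp.fst_eq_iff q hq r hr⟩⟩
  · exact ⟨iff_of_true hx hy, hp.mem_left_iff⟩
  · exact ⟨⟨iff_of_false (not_adj_self x) (not_adj_self y), hxq⟩,
      fun q hq => ⟨hqx q hq, hp.adj_iff q hq⟩⟩

open scoped Classical in
lemma IsPartialIso.exists_insert (hΔ : Δ.IsRandom) {p : Finset (V × W)}
    (hp : Γ.IsPartialIso Δ p) (x : V) : ∃ y, Γ.IsPartialIso Δ (insert (x, y) p) := by
  by_cases hxp : ∃ q ∈ p, q.1 = x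
  · obtain ⟨q, hq, rfl⟩ := hxp
    exact ⟨q.2, by rwa [Finset.insert_eq_of_mem hq]⟩
  push Not at hxp
  by_cases hx : x ∈ Γ.left
  · exact hp.exists_insert_of_mem_left hΔ hx hxp
  · exact (hp.swap.exists_insert_of_mem_left hΔ.swap (mem_right_iff_notMem_left.2 hx) hxp).imp
      fun _ h => IsPartialIso.swap (Γ := Γ.swap) (Δ := Δ.swap) h

lemma exists_equiv_of_forall_isPartialIso (U : Set (V × W))
    (hU : ∀ u ∈ U, ∀ v ∈ U, ∃ p, Γ.IsPartialIso Δ p ∧ u ∈ p ∧ v ∈ p)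
    (htotal : ∀ x, ∃ y, (x, y) ∈ U) (honto : ∀ y, ∃ x, (x, y) ∈ U) :
    ∃ e : V ≃ W, (∀ q ∈ U, e q.1 = q.2) ∧ (∀ v, v ∈ Γ.left ↔ e v ∈ Δ.left) ∧
      ∀ a b, Γ.adj a b ↔ Δ.adj (e a) (e b) := by
  choose f hf using htotal
  choose g hg using honto
  let e : V ≃ W :=
    { toFun := f
      invFun := g
      left_inv x :=
        let ⟨p, hp, h₁, h₂⟩ := hU _ (hg (f x)) _ (hf x)
        (hp.fst_eq_iff _ h₁ _ h₂).2 rfl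
      right_inv y :=
        let ⟨p, hp, h₁, h₂⟩ := hU _ (hf (g y)) _ (hg y)
        (hp.fst_eq_iff _ h₁ _ h₂).1 rfl }
  refine ⟨e, fun q hq => ?_, fun v => ?_, fun a b => ?_⟩
  · obtain ⟨p, hp, h₁, h₂⟩ := hU _ (hf q.1) q hq
    exact (hp.fst_eq_iff _ h₁ _ h₂).1 rfl
  · obtain ⟨p, hp, h, -⟩ := hU _ (hf v) _ (hf v)
    exact hp.mem_left_iff _ h
  · obtain ⟨p, hp, ha, hb⟩ := hU _ (hf a) _ (hf b)
    exact hp.adj_iff _ ha _ hb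

theorem IsPartialIso.exists_equiv (hΓ : Γ.IsRandom) (hΔ : Δ.IsRandom) {p : Finset (V × W)}
    (hp : Γ.IsPartialIso Δ p) :
    ∃ e : V ≃ W, (∀ q ∈ p, e q.1 = q.2) ∧ (∀ v, v ∈ Γ.left ↔ e v ∈ Δ.left) ∧
      ∀ a b, Γ.adj a b ↔ Δ.adj (e a) (e b) := by
  classical
  have := hΓ.countable
  have := hΔ.countable
  let := Encodable.ofCountable (V ⊕ W)
  let P := {p : Finset (V × W) // Γ.IsPartialIso Δ p}
  have forth (x : V) : IsCofinal {q : P | ∃ y, (x, y) ∈ q.1} := fun q =>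
    let ⟨y, hy⟩ := q.2.exists_insert hΔ x
    ⟨⟨_, hy⟩, ⟨y, Finset.mem_insert_self _ _⟩, Finset.subset_insert _ _⟩
  have back (y : W) : IsCofinal {q : P | ∃ x, (x, y) ∈ q.1} := fun q =>
    let ⟨x, hx⟩ := q.2.symm.exists_insert hΓ y
    ⟨⟨_, hx.symm⟩, ⟨x, by simp⟩, fun r hr => by simp [hr]⟩
  let 𝒟 : V ⊕ W → Order.Cofinal P := Sum.elim (fun x => ⟨_, forth x⟩) (fun y => ⟨_, back y⟩)
  let I := Order.idealOfCofinals (⟨p, hp⟩ : P) 𝒟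
  obtain ⟨e, he, hleft, hadj⟩ := exists_equiv_of_forall_isPartialIso {u | ∃ q ∈ I, u ∈ q.1}
    (by
      rintro u ⟨q, hq, hu⟩ v ⟨r, hr, hv⟩
      obtain ⟨m, -, hqm, hrm⟩ := I.directed q hq r hr
      exact ⟨m.1, m.2, hqm hu, hrm hv⟩)
    (fun x =>
      let ⟨q, ⟨y, hy⟩, hq⟩ := Order.cofinal_meets_idealOfCofinals _ 𝒟 (Sum.inl x)
      ⟨y, q, hq, hy⟩)
    (fun y =>
      let ⟨q, ⟨x, hx⟩, hq⟩ := Order.cofinal_meets_idealOfCofinals _ 𝒟 (Sum.inr y)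
      ⟨x, q, hq, hx⟩)
  exact ⟨e, fun q hq => he q ⟨_, Order.mem_idealOfCofinals _ 𝒟, hq⟩, hleft, hadj⟩

lemma mem_symLR_of_forall_mem_left_iff {g : Equiv.Perm V} (h : ∀ v, g v ∈ Γ.left ↔ v ∈ Γ.left) :
    g ∈ Γ.symLR :=
  ⟨h, fun v => by simp only [mem_right_iff_notMem_left, h]⟩

lemma adj_dom_of_mem_symLR {g : Equiv.Perm V} (hg : g ∈ Γ.symLR) {a b : V}
    (h : Γ.adj (g a) (g b)) : a ∈ Γ.left ∧ b ∈ Γ.right :=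
  ⟨(hg.1 a).1 (Γ.adj_dom _ _ h).1, (hg.2 b).1 (Γ.adj_dom _ _ h).2⟩

lemma IsRandom.exists_mem_autGroup (hΓ : Γ.IsRandom) {p : Finset (V × V)}
    (hp : Γ.IsPartialIso Γ p) : ∃ g ∈ Γ.autGroup, ∀ q ∈ p, g q.1 = q.2 := by
  obtain ⟨g, hgp, hleft, hadj⟩ := hp.exists_equiv hΓ hΓ
  exact ⟨g, ⟨mem_symLR_of_forall_mem_left_iff fun v => (hleft v).symm, hadj⟩, hgp⟩

variable (Γ) in
/-- `Γ` with the cross-types of all cross-edges at `w` exchanged. -/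
def switchAt (w : V) : BipartiteGraph V where
  left := Γ.left
  right := Γ.right
  adj a b := a ∈ Γ.left ∧ b ∈ Γ.right ∧ (Γ.adj a b ↔ a ≠ w)
  left_nonempty := Γ.left_nonempty
  right_nonempty := Γ.right_nonempty
  union_eq := Γ.union_eq
  disjoint_sides := Γ.disjoint_sides
  adj_dom _ _ h := ⟨h.1, h.2.1⟩

lemma IsRandom.switchAt (hΓ : Γ.IsRandom) (w : V) : (Γ.switchAt w).IsRandom where
  countable := hΓ.countable
  left_infinite := hΓ.left_infinite
  right_infinite := hΓ.right_infinite
  ext_left X₁ X₂ h₁ h₂ hX := by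
    classical
    obtain ⟨v, hv, -, hadj⟩ := hΓ.exists_right_adj_iff (X₁ ∪ X₂)
      (by rw [Finset.coe_union]; exact Set.union_subset h₁ h₂) (fun x => x ∈ X₁ ↔ x ≠ w) ∅
    refine ⟨v, hv, fun x hx => ⟨h₁ hx, hv, ?_⟩, fun x hx ⟨_, _, h⟩ => ?_⟩
    · simpa [hx] using hadj x (Finset.mem_union_left _ hx)
    · have := hadj x (Finset.mem_union_right _ hx)
      simp only [Finset.disjoint_right.1 hX hx, false_iff] at this
      tauto
  ext_right Y₁ Y₂ h₁ h₂ hY := by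
    classical
    obtain ⟨u, hu, huw, hadj⟩ := hΓ.exists_left_adj_iff (Y₁ ∪ Y₂)
      (by rw [Finset.coe_union]; exact Set.union_subset h₁ h₂) (· ∈ Y₁) {w}
    have huw : u ≠ w := by simpa using huw
    refine ⟨u, hu, fun y hy => ⟨hu, h₁ hy, ?_⟩, fun y hy ⟨_, _, h⟩ => ?_⟩
    · simpa [huw, hy] using hadj y (Finset.mem_union_left _ hy)
    · have := hadj y (Finset.mem_union_right _ hy)
      simp only [Finset.disjoint_right.1 hY hy, iff_false] at this
      exact this (h.2 huw)

variable (Γ) in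
def PreservesAdj (g : V → V) (a b : V) : Prop :=
  Γ.adj a b ↔ Γ.adj (g a) (g b)

lemma preservesAdj_mul (σ τ : Equiv.Perm V) (a b : V) :
    Γ.PreservesAdj ⇑(σ * τ) a b ↔ (Γ.PreservesAdj τ a b ↔ Γ.PreservesAdj σ (τ a) (τ b)) := by
  simp only [PreservesAdj, Equiv.Perm.mul_apply]
  tauto

lemma preservesAdj_inv (σ : Equiv.Perm V) (a b : V) :
    Γ.PreservesAdj ⇑σ⁻¹ a b ↔ Γ.PreservesAdj σ (σ⁻¹ a) (σ⁻¹ b) := by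
  simp only [PreservesAdj, Equiv.Perm.coe_inv, Equiv.apply_symm_apply]
  exact Iff.comm

lemma ncard_pair_inter_ne_one_iff {A : Set V} (hA : A ⊆ Γ.left) {a b : V} (hb : b ∈ Γ.right) :
    (({a, b} : Set V) ∩ A).ncard ≠ 1 ↔ a ∉ A := by
  rw [Set.pair_comm, Set.insert_inter_of_notMem fun h => notMem_left_of_mem_right hb (hA h)]
  by_cases ha : a ∈ A
  · simp [Set.singleton_inter_of_mem ha, ha]
  · simp [Set.singleton_inter_of_notMem ha, ha]

lemma isSwitch_iff {g : Equiv.Perm V} {A : Set V} (hA : A ⊆ Γ.left) :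
    Γ.IsSwitch g A ↔ g ∈ Γ.symLR ∧ ∀ a ∈ Γ.left, ∀ b ∈ Γ.right, Γ.PreservesAdj g a b ↔ a ∉ A := by
  refine and_congr_right fun _ => forall₂_congr fun a _ => forall₂_congr fun b hb => ?_
  rw [ncard_pair_inter_ne_one_iff hA hb]
  rfl

lemma IsRandom.exists_isSwitch_singleton (hΓ : Γ.IsRandom) {w : V} (hw : w ∈ Γ.left) :
    ∃ g, Γ.IsSwitch g {w} := by
  have hp : Γ.IsPartialIso (Γ.switchAt w) {(w, w)} := by
    refine ⟨by simp, fun q hq => ?_, ?_⟩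
    · rw [Finset.mem_singleton.1 hq]
      exact Iff.rfl
    simpa using iff_of_false (not_adj_self w) (not_adj_self (Γ := Γ.switchAt w) w)
  obtain ⟨g, hgw, hleft, hadj⟩ := hp.exists_equiv hΓ (hΓ.switchAt w)
  have hg : g ∈ Γ.symLR := mem_symLR_of_forall_mem_left_iff fun v => (hleft v).symm
  refine ⟨g, (isSwitch_iff (Set.singleton_subset_iff.2 hw)).2 ⟨hg, fun a ha b hb => ?_⟩⟩
  have hgw : g w = w := by simpa using hgw
  have hga : g a ≠ w ↔ a ≠ w :=
    ⟨fun h h' => h (h' ▸ hgw), fun h h' => h (g.injective (h'.trans hgw.symm))⟩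
  have hab : Γ.adj a b ↔ (Γ.adj (g a) (g b) ↔ a ≠ w) := by
    rw [hadj a b, ← hga]
    exact ⟨fun h => h.2.2, fun h => ⟨(hg.1 a).2 ha, (hg.2 b).2 hb, h⟩⟩
  simp only [PreservesAdj, Set.mem_singleton_iff]
  tauto

lemma IsSwitch.mul {σ τ : Equiv.Perm V} {A B : Set V} (hA : A ⊆ Γ.left) (hB : B ⊆ Γ.left)
    (hσ : Γ.IsSwitch σ A) (hτ : Γ.IsSwitch τ B) :
    Γ.IsSwitch (σ * τ) (symmDiff B (τ ⁻¹' A)) := by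
  rw [isSwitch_iff hA] at hσ
  rw [isSwitch_iff hB] at hτ
  have hτA : τ ⁻¹' A ⊆ Γ.left := fun a ha => (hτ.1.1 a).1 (hA ha)
  rw [isSwitch_iff (Set.symmDiff_subset_union.trans (Set.union_subset hB hτA))]
  refine ⟨mul_mem hσ.1 hτ.1, fun a ha b hb => ?_⟩
  rw [preservesAdj_mul, hτ.2 a ha b hb, hσ.2 (τ a) ((hτ.1.1 a).2 ha) (τ b) ((hτ.1.2 b).2 hb),
    Set.mem_symmDiff, Set.mem_preimage]
  tauto

open scoped Classical in
lemma IsRandom.exists_isSwitch_mem (hΓ : Γ.IsRandom) {G : Subgroup (Equiv.Perm V)}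
    (hG : ∀ v ∈ Γ.left, ∀ g, Γ.IsSwitch g {v} → g ∈ G) (C : Finset V) (hC : ↑C ⊆ Γ.left) :
    ∃ τ ∈ G, Γ.IsSwitch τ C := by
  induction C using Finset.induction_on with
  | empty =>
    rw [Finset.coe_empty]
    refine ⟨1, one_mem G, (isSwitch_iff (Set.empty_subset _)).2 ⟨one_mem _, ?_⟩⟩
    simp [PreservesAdj]
  | @insert w C hwC ih =>
    rw [Finset.coe_insert, Set.insert_subset_iff] at hC
    obtain ⟨τ, hτG, hτ⟩ := ih hC.2
    have hτw : τ w ∈ Γ.left := (hτ.1.1 w).2 hC.1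
    obtain ⟨g, hg⟩ := hΓ.exists_isSwitch_singleton hτw
    refine ⟨g * τ, mul_mem (hG _ hτw g hg) hτG, ?_⟩
    convert hg.mul (Set.singleton_subset_iff.2 hτw) hC.2 hτ using 1
    ext x
    simp only [Finset.coe_insert, Set.mem_insert_iff, Set.mem_symmDiff, Finset.mem_coe,
      Set.mem_preimage, Set.mem_singleton_iff, EmbeddingLike.apply_eq_iff_eq]
    grind

variable (Γ) in
def rowFlipGroup : Subgroup (Equiv.Perm V) where
  carrier := {σ | σ ∈ Γ.symLR ∧ ∀ a ∈ Γ.left, ∀ b ∈ Γ.right, ∀ b' ∈ Γ.right,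
    Γ.PreservesAdj σ a b ↔ Γ.PreservesAdj σ a b'}
  one_mem' := ⟨one_mem _, fun _ _ _ _ _ _ => by simp [PreservesAdj]⟩
  mul_mem' := by
    rintro σ τ ⟨hσ, hσrow⟩ ⟨hτ, hτrow⟩
    refine ⟨mul_mem hσ hτ, fun a ha b hb b' hb' => ?_⟩
    rw [preservesAdj_mul, preservesAdj_mul, hτrow a ha b hb b' hb',
      hσrow (τ a) ((hτ.1 a).2 ha) (τ b) ((hτ.2 b).2 hb) (τ b') ((hτ.2 b').2 hb')]
  inv_mem' := by
    rintro σ ⟨hσ, hσrow⟩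
    have hσ' := inv_mem hσ
    refine ⟨hσ', fun a ha b hb b' hb' => ?_⟩
    rw [preservesAdj_inv, preservesAdj_inv]
    exact hσrow _ ((hσ'.1 a).2 ha) _ ((hσ'.2 b).2 hb) _ ((hσ'.2 b').2 hb')

lemma isClosedSubgroup_rowFlipGroup : IsClosedSubgroup Γ.rowFlipGroup := by
  classical
  intro σ hσ
  refine ⟨⟨fun v => ?_, fun v => ?_⟩, fun a ha b hb b' hb' => ?_⟩
  · obtain ⟨h, hh, hv⟩ := hσ {v}
    rw [← hv v (Finset.mem_singleton_self v)]
    exact hh.1.1 v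
  · obtain ⟨h, hh, hv⟩ := hσ {v}
    rw [← hv v (Finset.mem_singleton_self v)]
    exact hh.1.2 v
  · obtain ⟨h, hh, hagree⟩ := hσ {a, b, b'}
    simp only [PreservesAdj]
    rw [← hagree a (by simp), ← hagree b (by simp), ← hagree b' (by simp)]
    exact hh.2 a ha b hb b' hb'

lemma autGroup_le_rowFlipGroup : Γ.autGroup ≤ Γ.rowFlipGroup :=
  fun _ hg => ⟨hg.1, fun a _ b _ b' _ => iff_of_true (hg.2 a b) (hg.2 a b')⟩

lemma IsSwitch.mem_rowFlipGroup {g : Equiv.Perm V} {A : Set V} (hA : A ⊆ Γ.left)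
    (hg : Γ.IsSwitch g A) : g ∈ Γ.rowFlipGroup := by
  rw [isSwitch_iff hA] at hg
  exact ⟨hg.1, fun a ha b hb b' hb' => (hg.2 a ha b hb).trans (hg.2 a ha b' hb').symm⟩

open scoped Classical in
lemma isPartialIso_image {σ τ : Equiv.Perm V} (hσ : σ ∈ Γ.symLR) (hτ : τ ∈ Γ.symLR)
    {F : Finset V} (h : ∀ a ∈ F, a ∈ Γ.left → ∀ b ∈ F, b ∈ Γ.right →
      (Γ.PreservesAdj τ a b ↔ Γ.PreservesAdj σ a b)) :
    Γ.IsPartialIso Γ (F.image fun x => (τ x, σ x)) := by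
  refine ⟨?_, ?_, ?_⟩ <;> simp only [Finset.mem_image, forall_exists_index, and_imp]
  · rintro _ a - rfl _ b - rfl
    exact τ.injective.eq_iff.trans σ.injective.eq_iff.symm
  · rintro _ a - rfl
    exact (hτ.1 a).trans (hσ.1 a).symm
  · rintro _ a ha rfl _ b hb rfl
    by_cases hab : a ∈ Γ.left ∧ b ∈ Γ.right
    · have := h a ha hab.1 b hb hab.2
      simp only [PreservesAdj] at this
      tauto
    · exact iff_of_false (fun h => hab (adj_dom_of_mem_symLR hτ h))
        (fun h => hab (adj_dom_of_mem_symLR hσ h))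

open scoped Classical in
lemma IsRandom.exists_mem_eqOn_of_mem_rowFlipGroup (hΓ : Γ.IsRandom)
    {G : Subgroup (Equiv.Perm V)} (hAut : Γ.autGroup ≤ G)
    (hsw : ∀ v ∈ Γ.left, ∀ g, Γ.IsSwitch g {v} → g ∈ G) {σ : Equiv.Perm V}
    (hσ : σ ∈ Γ.rowFlipGroup) (F : Finset V) : ∃ h ∈ G, ∀ x ∈ F, h x = σ x := by
  let C := F.filter fun a => a ∈ Γ.left ∧ ∃ b ∈ Γ.right, ¬ Γ.PreservesAdj σ a b
  have hC : ↑C ⊆ Γ.left := fun a ha => (Finset.mem_filter.1 ha).2.1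
  obtain ⟨τ, hτG, hτ⟩ := hΓ.exists_isSwitch_mem hsw C hC
  rw [isSwitch_iff hC] at hτ
  have hτσ : ∀ a ∈ F, a ∈ Γ.left → ∀ b ∈ F, b ∈ Γ.right →
      (Γ.PreservesAdj τ a b ↔ Γ.PreservesAdj σ a b) := by
    intro a haF ha b _ hb
    simp only [hτ.2 a ha b hb, C, Finset.coe_filter, Set.mem_ofPred_eq, haF, ha, true_and,
      not_exists, not_and, not_not]
    exact ⟨fun h => h b hb, fun h b' hb' => (hσ.2 a ha b hb b' hb').1 h⟩
  obtain ⟨α, hα, hαF⟩ := hΓ.exists_mem_autGroup (isPartialIso_image hσ.1 hτ.1 hτσ)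
  exact ⟨α * τ, mul_mem (hAut hα) hτG, fun x hx => hαF _ (Finset.mem_image_of_mem _ hx)⟩

lemma even_edgeCount_triple {a b₁ b₂ : V} (ha : a ∈ Γ.left) (hb₁ : b₁ ∈ Γ.right)
    (hb₂ : b₂ ∈ Γ.right) (hne : b₁ ≠ b₂) :
    Even (Γ.edgeCount {a, b₁, b₂}) ↔ (Γ.adj a b₁ ↔ Γ.adj a b₂) := by
  classical
  have hedges : {p : V × V | p.1 ∈ ({a, b₁, b₂} : Set V) ∧ p.2 ∈ ({a, b₁, b₂} : Set V) ∧
      Γ.adj p.1 p.2} = ↑(({(a, b₁), (a, b₂)} : Finset (V × V)).filter fun p => Γ.adj p.1 p.2) := by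
    ext ⟨x, y⟩
    simp only [Set.mem_ofPred_eq, Set.mem_insert_iff, Set.mem_singleton_iff, Finset.coe_filter,
      Finset.mem_insert, Finset.mem_singleton, Prod.mk.injEq]
    have := Γ.adj_dom x y
    have := notMem_right_of_mem_left ha
    have := notMem_left_of_mem_right hb₁
    have := notMem_left_of_mem_right hb₂
    grind
  rw [edgeCount, hedges, Set.ncard_coe_finset, Finset.filter_insert, Finset.filter_singleton]
  by_cases h₁ : Γ.adj a b₁ <;> by_cases h₂ : Γ.adj a b₂ <;> simp [h₁, h₂, hne]

lemma preservesParityOn_triple {σ : Equiv.Perm V} (hσ : σ ∈ Γ.symLR) {a b₁ b₂ : V}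
    (ha : a ∈ Γ.left) (hb₁ : b₁ ∈ Γ.right) (hb₂ : b₂ ∈ Γ.right) (hne : b₁ ≠ b₂) :
    Γ.PreservesParityOn σ {a, b₁, b₂} ↔ (Γ.PreservesAdj σ a b₁ ↔ Γ.PreservesAdj σ a b₂) := by
  rw [PreservesParityOn, Set.image_insert_eq, Set.image_insert_eq, Set.image_singleton,
    even_edgeCount_triple ha hb₁ hb₂ hne, even_edgeCount_triple ((hσ.1 a).2 ha)
      ((hσ.2 b₁).2 hb₁) ((hσ.2 b₂).2 hb₂) (σ.injective.ne hne), PreservesAdj, PreservesAdj]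
  tauto

lemma isMNSubgraph_one_two_iff {S : Set V} :
    Γ.IsMNSubgraph S 1 2 ↔ ∃ a b₁ b₂, a ∈ Γ.left ∧ b₁ ∈ Γ.right ∧ b₂ ∈ Γ.right ∧ b₁ ≠ b₂ ∧
      S = {a, b₁, b₂} := by
  constructor
  · rintro ⟨-, hl, hr⟩
    obtain ⟨a, ha⟩ := Set.ncard_eq_one.1 hl
    obtain ⟨b₁, b₂, hne, hb⟩ := Set.ncard_eq_two.1 hr
    have hS : S = S ∩ Γ.left ∪ S ∩ Γ.right := by
      rw [← Set.inter_union_distrib_left, Γ.union_eq, Set.inter_univ]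
    refine ⟨a, b₁, b₂, (ha.symm.subset rfl).2, (hb.symm.subset (by simp)).2,
      (hb.symm.subset (by simp)).2, hne, ?_⟩
    rw [hS, ha, hb, Set.singleton_union]
  · rintro ⟨a, b₁, b₂, ha, hb₁, hb₂, hne, rfl⟩
    refine ⟨Set.toFinite _, ?_, ?_⟩
    · rw [Set.insert_inter_of_mem ha, Set.insert_inter_of_notMem (notMem_left_of_mem_right hb₁),
        Set.singleton_inter_of_notMem (notMem_left_of_mem_right hb₂), insert_empty_eq,
        Set.ncard_singleton]
    · rw [Set.insert_inter_of_notMem (notMem_right_of_mem_left ha), Set.insert_inter_of_mem hb₁,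
        Set.singleton_inter_of_mem hb₂, Set.ncard_pair hne]

lemma coe_rowFlipGroup : (Γ.rowFlipGroup : Set (Equiv.Perm V)) =
    {σ | σ ∈ Γ.symLR ∧ ∀ S, Γ.IsMNSubgraph S 1 2 → Γ.PreservesParityOn σ S} := by
  ext σ
  refine and_congr_right fun hσ => ?_
  simp only [isMNSubgraph_one_two_iff]
  constructor
  · rintro hrow S ⟨a, b₁, b₂, ha, hb₁, hb₂, hne, rfl⟩
    exact (preservesParityOn_triple hσ ha hb₁ hb₂ hne).2 (hrow a ha b₁ hb₁ b₂ hb₂)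
  · intro hpar a ha b hb b' hb'
    rcases eq_or_ne b b' with rfl | hne
    · rfl
    · exact (preservesParityOn_triple hσ ha hb hb' hne).1 (hpar _ ⟨a, b, b', ha, hb, hb', hne, rfl⟩)

lemma switchGroup_l_le_rowFlipGroup : Γ.switchGroup {BSide.l} ≤ Γ.rowFlipGroup := by
  refine sInf_le ⟨isClosedSubgroup_rowFlipGroup, Set.union_subset autGroup_le_rowFlipGroup ?_⟩
  rintro g ⟨i, rfl, v, hv, hg⟩
  exact hg.mem_rowFlipGroup (Set.singleton_subset_iff.2 hv)

end BipartiteGraph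

/-- **Lemma 2.3.** `S_{l}(Γ)` is exactly the set of side-preserving
permutations which preserve the parity of cross-types in every
`(1 × 2)`-subgraph of `Γ`. -/
theorem switchGroup_l_eq_parity_preservers {V : Type*} (Γ : BipartiteGraph V)
    (hΓ : Γ.IsRandom) :
    (Γ.switchGroup {BSide.l} : Set (Equiv.Perm V)) =
      {σ : Equiv.Perm V | σ ∈ Γ.symLR ∧
        ∀ S : Set V, Γ.IsMNSubgraph S 1 2 → Γ.PreservesParityOn (⇑σ) S} := by
  rw [← Γ.coe_rowFlipGroup]
  refine congrArg _ (Γ.switchGroup_l_le_rowFlipGroup.antisymm fun σ hσ => ?_)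
  refine Subgroup.mem_sInf.2 fun G ⟨hG, hgen⟩ => hG σ ?_
  exact hΓ.exists_mem_eqOn_of_mem_rowFlipGroup (fun g hg => hgen (Or.inl hg))
    (fun v hv g hg => hgen (Or.inr ⟨BSide.l, rfl, v, hv, hg⟩)) hσ
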